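/- Let K ⊆ M_ξ Σ be a language such that the syntactic congruence ≼_K is a congruence ordering on M Σ. Then the syntactic morphism syn_K : M Σ → Syn(K) is terminal among surjective morphisms recognising K: for every surjective M-algebra morphism φ : M Σ → A recognising K, there exists a unique M-algebra morphism ρ : A → Syn(K) with syn_K = ρ ∘ φ. -/

import Mathlib

/-- An object of `Pos`: a type equipped with a partial order. -/
structure Pos : Type 1 where
  car : Type
  po : PartialOrder car

attribute [instance] Pos.po

/-- Monotone maps between objects of `Pos`. -/
structure PHom (A B : Pos) where
  f : A.car → B.car
  mono : Monotone f

def PHom.id (A : Pos) : PHom A A := ⟨fun a => a, fun _ _ h => h⟩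

def PHom.comp {A B C : Pos} (g : PHom B C) (f : PHom A B) : PHom A C :=
  ⟨fun a => g.f (f.f a), fun _ _ h => g.mono (f.mono h)⟩

/-- A monad on the category `Pos` of partially ordered sets and monotone maps. -/
structure OMonad : Type 1 where
  obj : Pos → Pos
  map : {A B : Pos} → PHom A B → PHom (obj A) (obj B)
  map_id : ∀ A : Pos, map (PHom.id A) = PHom.id (obj A)
  map_comp : ∀ {A B C : Pos} (f : PHom A B) (g : PHom B C),
      map (g.comp f) = (map g).comp (map f)
  sing : ∀ A : Pos, PHom A (obj A)
  flat : ∀ A : Pos, PHom (obj (obj A)) (obj A)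
  sing_nat : ∀ {A B : Pos} (f : PHom A B), (map f).comp (sing A) = (sing B).comp f
  flat_nat : ∀ {A B : Pos} (f : PHom A B),
      (map f).comp (flat A) = (flat B).comp (map (map f))
  flat_sing : ∀ A, (flat A).comp (sing (obj A)) = PHom.id (obj A)
  flat_map_sing : ∀ A, (flat A).comp (map (sing A)) = PHom.id (obj A)
  flat_assoc : ∀ A, (flat A).comp (flat (obj A)) = (flat A).comp (map (flat A))

/-- An Eilenberg–Moore algebra for the monad `M`. -/
structure OAlg (M : OMonad) where
  A : Pos
  pi : PHom (M.obj A) A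
  unit_law : pi.comp (M.sing A) = PHom.id A
  assoc_law : pi.comp (M.map pi) = pi.comp (M.flat A)

/-- A morphism of Eilenberg–Moore algebras. -/
structure OAlgHom {M : OMonad} (X Y : OAlg M) where
  h : PHom X.A Y.A
  comm : h.comp X.pi = Y.pi.comp (M.map h)

def OAlgHom.comp {M : OMonad} {X Y Z : OAlg M} (g : OAlgHom Y Z) (f : OAlgHom X Y) :
    OAlgHom X Z :=
  ⟨g.h.comp f.h, by
    calc (g.h.comp f.h).comp X.pi = g.h.comp (f.h.comp X.pi) := rfl
      _ = g.h.comp (Y.pi.comp (M.map f.h)) := by rw [f.comm]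
      _ = (g.h.comp Y.pi).comp (M.map f.h) := rfl
      _ = (Z.pi.comp (M.map g.h)).comp (M.map f.h) := by rw [g.comm]
      _ = Z.pi.comp ((M.map g.h).comp (M.map f.h)) := rfl
      _ = Z.pi.comp (M.map (g.h.comp f.h)) := by rw [← M.map_comp]⟩

/-- The free `M`-algebra over `A`, carried by `M A` with product `flat`. -/
def OMonad.free (M : OMonad) (A : Pos) : OAlg M :=
  ⟨M.obj A, M.flat A, M.flat_sing A, (M.flat_assoc A).symm⟩

/- Sub-posets, products, relations as sub-posets of products. -/

def Pos.sub (A : Pos) (S : Set A.car) : Pos := ⟨{a : A.car // a ∈ S}, inferInstance⟩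

def subIncl (A : Pos) (S : Set A.car) : PHom (A.sub S) A := ⟨fun a => a.val, fun _ _ h => h⟩

def Pos.prod (A B : Pos) : Pos := ⟨A.car × B.car, inferInstance⟩

def prodFst (A B : Pos) : PHom (A.prod B) A := ⟨Prod.fst, fun _ _ h => h.1⟩
def prodSnd (A B : Pos) : PHom (A.prod B) B := ⟨Prod.snd, fun _ _ h => h.2⟩

/-- A relation `r` on `A`, as a sub-poset of `A × A`. -/
def relPos (A : Pos) (r : A.car → A.car → Prop) : Pos :=
  ⟨{p : A.car × A.car // r p.1 p.2}, inferInstance⟩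

def relFst (A : Pos) (r : A.car → A.car → Prop) : PHom (relPos A r) A :=
  ⟨fun p => p.val.1, fun _ _ h => h.1⟩
def relSnd (A : Pos) (r : A.car → A.car → Prop) : PHom (relPos A r) A :=
  ⟨fun p => p.val.2, fun _ _ h => h.2⟩

/- The standing convention on the monad `M`. -/

def PreservesInj (M : OMonad) : Prop :=
  ∀ {A B : Pos} (f : PHom A B), Function.Injective f.f → Function.Injective (M.map f).f
def PreservesSurj (M : OMonad) : Prop :=
  ∀ {A B : Pos} (f : PHom A B), Function.Surjective f.f → Function.Surjective (M.map f).f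
def PreservesBij (M : OMonad) : Prop :=
  ∀ {A B : Pos} (f : PHom A B), Function.Bijective f.f → Function.Bijective (M.map f).f
def PreservesPre (M : OMonad) : Prop :=
  ∀ {A B : Pos} (f : PHom A B) (S : Set B.car),
    Set.range (M.map (subIncl A (f.f ⁻¹' S))).f
      = (M.map f).f ⁻¹' Set.range (M.map (subIncl B S)).f

/-- `M` uses the standard ordering: the order on `M A` is the lift of the order on `A`. -/
def UsesStdOrder (M : OMonad) : Prop :=
  ∀ (A : Pos) (s t : (M.obj A).car),
    s ≤ t ↔ ∃ u : (M.obj (relPos A (fun a b => a ≤ b))).car,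
      (M.map (relFst A (fun a b => a ≤ b))).f u = s ∧
      (M.map (relSnd A (fun a b => a ≤ b))).f u = t

/-- The standing convention of the paper. -/
def Convention (M : OMonad) : Prop :=
  PreservesInj M ∧ PreservesSurj M ∧ PreservesBij M ∧ PreservesPre M ∧ UsesStdOrder M

/- Quotients by preorders containing the order. -/

/-- A preorder on (the carrier of) `A` containing the partial order of `A`. -/
structure PreCong (A : Pos) where
  r : A.car → A.car → Prop
  refl : ∀ a, r a a
  trans : ∀ a b c, r a b → r b c → r a c
  le_sub : ∀ a b : A.car, a ≤ b → r a b

def PreCong.setoid {A : Pos} (co : PreCong A) : Setoid A.car where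
  r a b := co.r a b ∧ co.r b a
  iseqv := ⟨fun a => ⟨co.refl a, co.refl a⟩, fun h => ⟨h.2, h.1⟩,
    fun h1 h2 => ⟨co.trans _ _ _ h1.1 h2.1, co.trans _ _ _ h2.2 h1.2⟩⟩

/-- The quotient poset `A/⊑`. -/
def quotPos {A : Pos} (co : PreCong A) : Pos where
  car := Quotient co.setoid
  po :=
    { le := Quotient.lift₂ co.r (fun a b a' b' ha hb => propext
        ⟨fun h => co.trans _ _ _ ha.2 (co.trans _ _ _ h hb.1),
         fun h => co.trans _ _ _ ha.1 (co.trans _ _ _ h hb.2)⟩)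
      le_refl := fun q => Quotient.inductionOn q co.refl
      lt := fun x y => Quotient.lift₂ (s₁ := co.setoid) (s₂ := co.setoid) co.r (fun a b a' b' ha hb => propext
          ⟨fun h => co.trans _ _ _ ha.2 (co.trans _ _ _ h hb.1),
           fun h => co.trans _ _ _ ha.1 (co.trans _ _ _ h hb.2)⟩) x y ∧
        ¬ Quotient.lift₂ (s₁ := co.setoid) (s₂ := co.setoid) co.r (fun a b a' b' ha hb => propext
          ⟨fun h => co.trans _ _ _ ha.2 (co.trans _ _ _ h hb.1),
           fun h => co.trans _ _ _ ha.1 (co.trans _ _ _ h hb.2)⟩) y x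
      lt_iff_le_not_ge := fun _ _ => Iff.rfl
      le_trans := by
        intro q1 q2 q3
        refine Quotient.inductionOn₃ q1 q2 q3 ?_
        intro a b d h1 h2
        exact co.trans a b d h1 h2
      le_antisymm := by
        intro q1 q2
        refine Quotient.inductionOn₂ q1 q2 ?_
        intro a b h1 h2
        exact Quotient.sound ⟨h1, h2⟩ }

/-- The quotient map `A → A/⊑`. -/
def quotHom {A : Pos} (co : PreCong A) : PHom A (quotPos co) :=
  ⟨fun a => Quotient.mk co.setoid a, fun a b h => co.le_sub a b h⟩

/-- `⊑` is a congruence ordering on the algebra `X`: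
`s ⊑_M t` (i.e. `M q (s) ≤ M q (t)`) implies `π(s) ⊑ π(t)`. -/
def IsCongOrdP (M : OMonad) (X : OAlg M) (co : PreCong X.A) : Prop :=
  ∀ s t : (M.obj X.A).car,
    (M.map (quotHom co)).f s ≤ (M.map (quotHom co)).f t → co.r (X.pi.f s) (X.pi.f t)

/-- The relation `r` is a congruence ordering on the algebra `X`. -/
def IsCongruenceOrdering (M : OMonad) (X : OAlg M) (r : X.A.car → X.A.car → Prop) : Prop :=
  ∃ (h1 : ∀ a, r a a) (h2 : ∀ a b c, r a b → r b c → r a c)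
    (h3 : ∀ a b : X.A.car, a ≤ b → r a b),
    IsCongOrdP M X ⟨r, h1, h2, h3⟩

/- Contexts and syntactic congruences. -/

/-- `A + □`: the poset `A` extended by a single extra point `□`. -/
def Pos.addBox (A : Pos) : Pos := ⟨A.car ⊕ PUnit, inferInstance⟩

/-- The map `A + □ → A` substituting `a` for `□`. -/
def substHom (M : OMonad) (X : OAlg M) (a : X.A.car) : PHom X.A.addBox X.A :=
  ⟨fun z => Sum.elim (fun x => x) (fun _ => a) z, by
    intro x y h
    cases h with
    | inl h => exact h
    | inr h => exact le_refl a⟩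

/-- Evaluation `p[a]` of a context `p ∈ M(A + □)` at `a ∈ A`. -/
def ctxEval (M : OMonad) (X : OAlg M) (p : (M.obj X.A.addBox).car) (a : X.A.car) : X.A.car :=
  X.pi.f ((M.map (substHom M X a)).f p)

/-- The syntactic congruence `a ≼_K b` of a set `K`. -/
def synLe (M : OMonad) (X : OAlg M) (K : Set X.A.car) (a b : X.A.car) : Prop :=
  ∀ p : (M.obj X.A.addBox).car, ctxEval M X p a ∈ K → ctxEval M X p b ∈ K

def UpClosed (A : Pos) (K : Set A.car) : Prop :=
  ∀ a b : A.car, a ∈ K → a ≤ b → b ∈ K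

/-- The derivative `p⁻¹[K]` of `K` by the context `p`. -/
def ctxDeriv (M : OMonad) (X : OAlg M) (p : (M.obj X.A.addBox).car) (K : Set X.A.car) :
    Set X.A.car :=
  {a | ctxEval M X p a ∈ K}

/-- `A` carries the trivial (discrete) order. -/
def TrivOrder (A : Pos) : Prop := ∀ a b : A.car, a ≤ b → a = b

/-- A morphism from a free algebra recognises a language `K` if `K` is the preimage of
an upwards closed set. -/
def Recognises {M : OMonad} {Sg : Pos} {X : OAlg M} (φ : OAlgHom (M.free Sg) X)
    (K : Set ((M.obj Sg).car)) : Prop :=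
  ∃ P : Set X.A.car, UpClosed X.A P ∧ K = φ.h.f ⁻¹' P

/-- Embedding of `Σ + □` into `(M Σ) + □` via `sing`, used to view contexts over the
alphabet as contexts over the free algebra. -/
def singBox (M : OMonad) (Sg : Pos) : PHom Sg.addBox (M.obj Sg).addBox :=
  ⟨Sum.map (M.sing Sg).f (fun x => x), by
    intro x y h
    cases h with
    | inl h => exact Sum.LiftRel.inl ((M.sing Sg).mono h)
    | inr h => exact Sum.LiftRel.inr h⟩

/-- Evaluation of a context `p ∈ M(Σ + □)` at an element `s ∈ M Σ` of the free algebra. -/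
def freeCtxEval (M : OMonad) (Sg : Pos) (p : (M.obj Sg.addBox).car) (s : (M.obj Sg).car) :
    (M.obj Sg).car :=
  ctxEval M (M.free Sg) ((M.map (singBox M Sg)).f p) s

/- Finitary monads and algebras. -/

/-- `M` is finitary: it preserves directed unions. -/
def FinitaryM (M : OMonad) : Prop :=
  ∀ (A : Pos) (ι : Type) (D : ι → Set A.car), Directed (· ⊆ ·) D → (⋃ i, D i) = Set.univ →
    ∀ s : (M.obj A).car, ∃ i, ∃ s₀ : (M.obj (A.sub (D i))).car,
      (M.map (subIncl A (D i))).f s₀ = s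

/-- A finitary algebra: (sort-wise) finite universe and finitely generated. -/
def FinitaryAlg (M : OMonad) (X : OAlg M) : Prop :=
  Finite X.A.car ∧ ∃ C : Set X.A.car, C.Finite ∧
    ∀ a : X.A.car, ∃ s : (M.obj (X.A.sub C)).car, a = X.pi.f ((M.map (subIncl X.A C)).f s)
/-- A morphism of monads `M₀ ⇒ M₁`. -/
structure OMonadHom (M₀ M₁ : OMonad) where
  app : ∀ A : Pos, PHom (M₀.obj A) (M₁.obj A)
  naturality : ∀ {A B : Pos} (f : PHom A B),
      (app B).comp (M₀.map f) = (M₁.map f).comp (app A)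
  sing_comm : ∀ A : Pos, (app A).comp (M₀.sing A) = M₁.sing A
  flat_comm : ∀ A : Pos,
      (app A).comp (M₀.flat A)
        = (M₁.flat A).comp ((app (M₁.obj A)).comp (M₀.map (app A)))

/-- The `ρ`-reduct of an `M₁`-algebra: the `M₀`-algebra with product `π ∘ ρ`. -/
def OMonadHom.reduct {M₀ M₁ : OMonad} (ρ : OMonadHom M₀ M₁) (X : OAlg M₁) : OAlg M₀ where
  A := X.A
  pi := X.pi.comp (ρ.app X.A)
  unit_law := by
    calc (X.pi.comp (ρ.app X.A)).comp (M₀.sing X.A)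
        = X.pi.comp ((ρ.app X.A).comp (M₀.sing X.A)) := rfl
      _ = X.pi.comp (M₁.sing X.A) := by rw [ρ.sing_comm]
      _ = PHom.id X.A := X.unit_law
  assoc_law := by
    have hnat := ρ.naturality (X.pi.comp (ρ.app X.A))
    have hint := ρ.naturality (ρ.app X.A)
    calc (X.pi.comp (ρ.app X.A)).comp (M₀.map (X.pi.comp (ρ.app X.A)))
        = X.pi.comp ((ρ.app X.A).comp (M₀.map (X.pi.comp (ρ.app X.A)))) := rfl
      _ = X.pi.comp ((M₁.map (X.pi.comp (ρ.app X.A))).comp (ρ.app (M₀.obj X.A))) := by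
            rw [hnat]
      _ = (X.pi.comp (M₁.map (X.pi.comp (ρ.app X.A)))).comp (ρ.app (M₀.obj X.A)) := rfl
      _ = (X.pi.comp ((M₁.map X.pi).comp (M₁.map (ρ.app X.A)))).comp (ρ.app (M₀.obj X.A)) := by
            rw [M₁.map_comp]
      _ = ((X.pi.comp (M₁.map X.pi)).comp (M₁.map (ρ.app X.A))).comp (ρ.app (M₀.obj X.A)) := rfl
      _ = ((X.pi.comp (M₁.flat X.A)).comp (M₁.map (ρ.app X.A))).comp (ρ.app (M₀.obj X.A)) := by
            rw [X.assoc_law]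
      _ = X.pi.comp ((M₁.flat X.A).comp ((M₁.map (ρ.app X.A)).comp (ρ.app (M₀.obj X.A)))) := rfl
      _ = X.pi.comp ((M₁.flat X.A).comp ((ρ.app (M₁.obj X.A)).comp (M₀.map (ρ.app X.A)))) := by
            rw [hint]
      _ = X.pi.comp ((ρ.app X.A).comp (M₀.flat X.A)) := by rw [← ρ.flat_comm]
      _ = (X.pi.comp (ρ.app X.A)).comp (M₀.flat X.A) := rfl

/-- `ρ : M₀ ⇒ M₁` is dense over the class `C`. -/
def DenseOver {M₀ M₁ : OMonad} (ρ : OMonadHom M₀ M₁) (C : Set (OAlg M₁)) : Prop :=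
  ∀ X ∈ C, ∀ (S : Set X.A.car) (s : (M₁.obj (X.A.sub S)).car),
    ∃ s₀ : (M₀.obj (X.A.sub S)).car,
      X.pi.f ((ρ.app X.A).f ((M₀.map (subIncl X.A S)).f s₀))
        = X.pi.f ((M₁.map (subIncl X.A S)).f s)

/-- `P` is a binary product of `A` and `B` in the category of `M`-algebras
(concretely: the projections induce an order isomorphism with the product poset). -/
def IsBinProd (M : OMonad) (P A B : OAlg M) : Prop :=
  ∃ (pa : OAlgHom P A) (pb : OAlgHom P B),
    Function.Bijective (fun x => (pa.h.f x, pb.h.f x)) ∧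
    ∀ x y : P.A.car, x ≤ y ↔ (pa.h.f x ≤ pa.h.f y ∧ pb.h.f x ≤ pb.h.f y)

/-- Closure of a class of algebras under binary products. -/
inductive InProdClosure (M : OMonad) (C : Set (OAlg M)) : OAlg M → Prop
  | base : ∀ A ∈ C, InProdClosure M C A
  | prod : ∀ A B P, InProdClosure M C A → InProdClosure M C B →
      IsBinProd M P A B → InProdClosure M C P

/-- `P` is a product of the family `A` of `M`-algebras. -/
def IsProdOf (M : OMonad) (P : OAlg M) {I : Type} (A : I → OAlg M) : Prop :=
  ∃ p : ∀ i, OAlgHom P (A i),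
    Function.Bijective (fun (x : P.A.car) (i : I) => (p i).h.f x) ∧
    ∀ x y : P.A.car, x ≤ y ↔ ∀ i, (p i).h.f x ≤ (p i).h.f y

/-- `B` is a quotient of `A`. -/
def IsQuotientOf (M : OMonad) (B A : OAlg M) : Prop :=
  ∃ φ : OAlgHom A B, Function.Surjective φ.h.f

/-- `B` is a subalgebra of `A` (an order embedding which is a morphism). -/
def IsSubalgebraOf (M : OMonad) (B A : OAlg M) : Prop :=
  ∃ φ : OAlgHom B A, ∀ x y : B.A.car, φ.h.f x ≤ φ.h.f y ↔ x ≤ y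

/-- A pseudo-variety (here with a single sort): a class of finitary algebras closed
under quotients, finitary subalgebras of finite products, and (the single-sorted
instance of) sort-accumulation points. -/
def PseudoVariety (M : OMonad) (V : Set (OAlg M)) : Prop :=
  (∀ X ∈ V, FinitaryAlg M X) ∧
  (∀ A ∈ V, ∀ B, IsQuotientOf M B A → B ∈ V) ∧
  (∀ (n : ℕ) (A : Fin n → OAlg M), (∀ i, A i ∈ V) →
    ∀ P, IsProdOf M P A → ∀ B, FinitaryAlg M B → IsSubalgebraOf M B P → B ∈ V) ∧
  (∀ B, FinitaryAlg M B → (∃ A ∈ V, IsQuotientOf M A B) → B ∈ V)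

/-- The inclusion of a relation, as a sub-poset, into the product poset. -/
def relIncl (A : Pos) (r : A.car → A.car → Prop) : PHom (relPos A r) (A.prod A) :=
  ⟨fun p => p.val, fun _ _ h => h⟩

/-! If `φ` recognises `K = φ⁻¹[P]` with `P` upwards closed, then `φ s ≤ φ t` gives
`φ (p[s]) ≤ φ (p[t])` for every context `p`, because `M` lifts the pointwise order of the
substitutions; hence `ker φ ⊆ ≼_K = ker syn`. So `syn` factors through the surjection `φ` as a
monotone map, which is an algebra morphism because `M φ` is again surjective, and is unique
because `φ` is epic.
-/

theorem PHom.ext {A B : Pos} {f g : PHom A B} (h : f.f = g.f) : f = g := by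
  cases f; cases g; cases h; rfl

theorem PHom.cancel_right {A B C : Pos} {f : PHom A B} (hf : Function.Surjective f.f)
    {g g' : PHom B C} (h : g.comp f = g'.comp f) : g = g' :=
  PHom.ext (hf.injective_comp_right (congrArg PHom.f h))

noncomputable def PHom.factor {A B C : Pos} (f : PHom A B) (hf : Function.Surjective f.f)
    (g : PHom A C) (hker : ∀ a a', f.f a ≤ f.f a' → g.f a ≤ g.f a') : PHom B C :=
  ⟨g.f ∘ Function.surjInv hf, fun b b' hb => hker _ _ <| by
    simpa only [Function.surjInv_eq hf] using hb⟩

theorem PHom.factor_comp {A B C : Pos} (f : PHom A B) (hf : Function.Surjective f.f)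
    (g : PHom A C) (hker : ∀ a a', f.f a ≤ f.f a' → g.f a ≤ g.f a') :
    (f.factor hf g hker).comp f = g :=
  PHom.ext <| funext fun a => le_antisymm
    (hker _ _ (Function.surjInv_eq hf (f.f a)).le)
    (hker _ _ (Function.surjInv_eq hf (f.f a)).ge)

theorem OAlgHom.ext {M : OMonad} {X Y : OAlg M} {f g : OAlgHom X Y} (h : f.h = g.h) :
    f = g := by
  cases f; cases g; cases h; rfl

theorem OAlgHom.cancel_right {M : OMonad} {X Y Z : OAlg M} {φ : OAlgHom X Y}
    (hφ : Function.Surjective φ.h.f) {ρ ρ' : OAlgHom Y Z} (h : ρ.comp φ = ρ'.comp φ) :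
    ρ = ρ' :=
  OAlgHom.ext (PHom.cancel_right hφ (congrArg OAlgHom.h h))

section Factor

variable {M : OMonad} {X Y Z : OAlg M}

theorem PHom.comp_pi_of_comp_eq (hM : PreservesSurj M) {φ : OAlgHom X Y}
    (hφ : Function.Surjective φ.h.f) (g : OAlgHom X Z) {ρ : PHom Y.A Z.A}
    (hρ : ρ.comp φ.h = g.h) : ρ.comp Y.pi = Z.pi.comp (M.map ρ) := by
  refine PHom.cancel_right (hM φ.h hφ) ?_
  calc (ρ.comp Y.pi).comp (M.map φ.h) = ρ.comp (φ.h.comp X.pi) :=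
        congrArg ρ.comp φ.comm.symm
    _ = Z.pi.comp (M.map g.h) := by rw [← g.comm, ← hρ]; rfl
    _ = (Z.pi.comp (M.map ρ)).comp (M.map φ.h) := by rw [← hρ, M.map_comp]; rfl

noncomputable def OAlgHom.factor (hM : PreservesSurj M) (φ : OAlgHom X Y)
    (hφ : Function.Surjective φ.h.f) (g : OAlgHom X Z)
    (hker : ∀ a a', φ.h.f a ≤ φ.h.f a' → g.h.f a ≤ g.h.f a') :
    OAlgHom Y Z :=
  ⟨φ.h.factor hφ g.h hker, PHom.comp_pi_of_comp_eq hM hφ g (PHom.factor_comp _ _ _ _)⟩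

theorem OAlgHom.factor_comp (hM : PreservesSurj M) (φ : OAlgHom X Y)
    (hφ : Function.Surjective φ.h.f) (g : OAlgHom X Z)
    (hker : ∀ a a', φ.h.f a ≤ φ.h.f a' → g.h.f a ≤ g.h.f a') :
    (OAlgHom.factor hM φ hφ g hker).comp φ = g :=
  OAlgHom.ext (PHom.factor_comp _ _ _ hker)

end Factor

theorem OMonad.map_le_map_of_forall_le {M : OMonad} (hM : UsesStdOrder M) {A B : Pos}
    {f g : PHom A B} (hfg : ∀ a, f.f a ≤ g.f a) (u : (M.obj A).car) :
    (M.map f).f u ≤ (M.map g).f u := by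
  let fg : PHom A (relPos B (· ≤ ·)) :=
    ⟨fun a => ⟨(f.f a, g.f a), hfg a⟩, fun _ _ h => ⟨f.mono h, g.mono h⟩⟩
  refine (hM B _ _).2 ⟨(M.map fg).f u, ?_, ?_⟩
  · change (M.map (relFst B _)).f _ = (M.map ((relFst B _).comp fg)).f u
    rw [M.map_comp]; rfl
  · change (M.map (relSnd B _)).f _ = (M.map ((relSnd B _).comp fg)).f u
    rw [M.map_comp]; rfl

theorem OAlgHom.apply_ctxEval {M : OMonad} {X Y : OAlg M} (φ : OAlgHom X Y)
    (p : (M.obj X.A.addBox).car) (a : X.A.car) :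
    φ.h.f (ctxEval M X p a) = Y.pi.f ((M.map (φ.h.comp (substHom M X a))).f p) := by
  rw [M.map_comp]
  exact congrArg (fun k : PHom _ _ => k.f ((M.map (substHom M X a)).f p)) φ.comm

theorem synLe_preimage_of_le {M : OMonad} (hM : UsesStdOrder M) {X Y : OAlg M}
    (φ : OAlgHom X Y) {P : Set Y.A.car} (hP : UpClosed Y.A P) {s t : X.A.car}
    (h : φ.h.f s ≤ φ.h.f t) : synLe M X (φ.h.f ⁻¹' P) s t := by
  intro p hp
  refine hP _ _ hp ?_
  rw [φ.apply_ctxEval, φ.apply_ctxEval]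
  refine Y.pi.mono (OMonad.map_le_map_of_forall_le hM ?_ p)
  rintro (x | _)
  exacts [le_rfl, h]

theorem syntactic_morphism_terminal_general (M : OMonad) (hM : Convention M)
    (Sg : Pos)
    (K : Set ((M.obj Sg).car))
    (S : OAlg M) (syn : OAlgHom (M.free Sg) S)
    (hker : ∀ s t : (M.obj Sg).car,
      syn.h.f s ≤ syn.h.f t ↔ synLe M (M.free Sg) K s t) :
    ∀ (X : OAlg M) (φ : OAlgHom (M.free Sg) X), Function.Surjective φ.h.f →
      Recognises φ K → ∃! ρ : OAlgHom X S, syn = ρ.comp φ := by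
  rintro X φ hφ ⟨P, hP, rfl⟩
  have hle : ∀ s t, φ.h.f s ≤ φ.h.f t → syn.h.f s ≤ syn.h.f t := fun s t h =>
    (hker s t).2 (synLe_preimage_of_le hM.2.2.2.2 φ hP h)
  have hfactor := OAlgHom.factor_comp hM.2.1 φ hφ syn hle
  exact ⟨_, hfactor.symm, fun ρ hρ => OAlgHom.cancel_right hφ (hρ.symm.trans hfactor.symm)⟩

/-- Terminality of the syntactic morphism.  Let `K ⊆ M Σ` be a language whose
syntactic congruence is a congruence ordering, with syntactic algebra `S` and
syntactic morphism `syn` (a surjective morphism whose kernel is exactly `≼_K`).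
For every surjective morphism `φ : M Σ → X` recognising `K` there is a unique
morphism `ρ : X → S` with `syn = ρ ∘ φ`. -/
theorem syntactic_morphism_terminal (M : OMonad) (hM : Convention M)
    (Sg : Pos) (hfin : Finite Sg.car) (htriv : TrivOrder Sg)
    (K : Set ((M.obj Sg).car))
    (S : OAlg M) (syn : OAlgHom (M.free Sg) S)
    (hsurj : Function.Surjective syn.h.f)
    (hker : ∀ s t : (M.obj Sg).car,
      syn.h.f s ≤ syn.h.f t ↔ synLe M (M.free Sg) K s t) :
    ∀ (X : OAlg M) (φ : OAlgHom (M.free Sg) X), Function.Surjective φ.h.f →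
      Recognises φ K → ∃! ρ : OAlgHom X S, syn = ρ.comp φ :=
  syntactic_morphism_terminal_general M hM Sg K S syn hker
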